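/- On the dual L* ≅ ℝ⁸ of the free nilpotent Lie algebra of rank 2, step 4, with Lie–Poisson brackets determined by {h1,h2}=h3, {h1,h3}=h4, {h2,h3}=h5, {h1,h4}=h6, {h1,h5}={h2,h4}=h7, {h2,h5}=h8 (all other brackets of coordinates zero), the functions h6, h7, h8 and C = h5²h6 - 2h4h5h7 + h4²h8 - 2h3(h6h8 - h7²) are Casimir functions: they Poisson-commute with all the coordinate functions h1,...,h8. -/
import Mathlib


/- Casimir functions of the Lie–Poisson structure on the dual of the free
nilpotent Lie algebra of rank 2, step 4. -/

noncomputable section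

abbrev Lstar : Type := Fin 8 → ℝ

/-- Nonzero part of the structure constants (0-indexed):
[X1,X2]=X3, [X1,X3]=X4, [X2,X3]=X5, [X1,X4]=X6, [X1,X5]=[X2,X4]=X7, [X2,X5]=X8. -/
noncomputable def posPart (i j k : Fin 8) : ℝ :=
  if (i, j, k) = (0, 1, 2) ∨ (i, j, k) = (0, 2, 3) ∨ (i, j, k) = (1, 2, 4) ∨
     (i, j, k) = (0, 3, 5) ∨ (i, j, k) = (0, 4, 6) ∨ (i, j, k) = (1, 3, 6) ∨
     (i, j, k) = (1, 4, 7)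
  then (1 : ℝ) else 0

/-- Skew-symmetrized structure constants cᵢⱼᵏ. -/
noncomputable def c (i j k : Fin 8) : ℝ := posPart i j k - posPart j i k

/-- Partial derivative ∂f/∂hᵢ at h. -/
noncomputable def pd (f : Lstar → ℝ) (h : Lstar) (i : Fin 8) : ℝ :=
  fderiv ℝ f h (Pi.single i 1)

/-- Lie–Poisson bracket: {f,g}(h) = Σᵢⱼₖ cᵢⱼᵏ hₖ (∂f/∂hᵢ)(∂g/∂hⱼ). -/
noncomputable def poisson (f g : Lstar → ℝ) (h : Lstar) : ℝ :=
  ∑ i, ∑ j, ∑ k, c i j k * h k * pd f h i * pd g h j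

/-- The Casimir C = h5²h6 − 2h4h5h7 + h4²h8 − 2h3(h6h8 − h7²). -/
noncomputable def C (h : Lstar) : ℝ :=
  (h 4)^2 * h 5 - 2 * h 3 * h 4 * h 6 + (h 3)^2 * h 7
    - 2 * h 2 * (h 5 * h 7 - (h 6)^2)

set_option maxHeartbeats 2000000 in
/-- Expansion of the Poisson bracket over the nonzero structure constants. -/
lemma poisson_eq (f g : Lstar → ℝ) (h : Lstar) : poisson f g h =
    h 2*(pd f h 0*pd g h 1 - pd f h 1*pd g h 0)
  + h 3*(pd f h 0*pd g h 2 - pd f h 2*pd g h 0)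
  + h 4*(pd f h 1*pd g h 2 - pd f h 2*pd g h 1)
  + h 5*(pd f h 0*pd g h 3 - pd f h 3*pd g h 0)
  + h 6*(pd f h 0*pd g h 4 - pd f h 4*pd g h 0 + pd f h 1*pd g h 3 - pd f h 3*pd g h 1)
  + h 7*(pd f h 1*pd g h 4 - pd f h 4*pd g h 1) := by
  unfold poisson c _root_.posPart
  simp only [Fin.sum_univ_eight, Prod.mk.injEq, Fin.reduceEq, and_true, true_and,
    and_false, false_and, or_true, true_or, or_false, false_or, reduceIte,
    mul_zero, zero_mul, mul_one, one_mul, sub_zero, zero_sub, sub_self,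
    add_zero, zero_add, neg_mul, and_self, or_self]
  ring

lemma pd_coord (j : Fin 8) (h : Lstar) (i : Fin 8) :
    pd (fun h => h j) h i = if j = i then 1 else 0 := by
  have : fderiv ℝ (fun h : Lstar => h j) h = ContinuousLinearMap.proj j :=
    (ContinuousLinearMap.proj (R := ℝ) (φ := fun _ : Fin 8 => ℝ) j).fderiv
  simp [pd, this, Pi.single_apply]

/-- The gradient of C. -/
noncomputable def gradC (h : Lstar) (i : Fin 8) : ℝ :=
  if i = 2 then -2*(h 5*h 7-(h 6)^2)
  else if i = 3 then -2*(h 4)*(h 6)+2*(h 3)*(h 7)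
  else if i = 4 then 2*(h 4)*(h 5)-2*(h 3)*(h 6)
  else if i = 5 then (h 4)^2-2*(h 2)*(h 7)
  else if i = 6 then -2*(h 3)*(h 4)+4*(h 2)*(h 6)
  else if i = 7 then (h 3)^2-2*(h 2)*(h 5)
  else 0

set_option maxHeartbeats 2000000 in
lemma pd_C (h : Lstar) (i : Fin 8) : pd C h i = gradC h i := by
  have p : ∀ k : Fin 8, HasFDerivAt (fun h : Lstar => h k)
      (ContinuousLinearMap.proj (R := ℝ) (φ := fun _ : Fin 8 => ℝ) k) h :=
    fun k => (ContinuousLinearMap.proj (R := ℝ) (φ := fun _ : Fin 8 => ℝ) k).hasFDerivAt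
  have hfun : C = fun h : Lstar =>
      (h 4 * h 4) * h 5 - 2 * h 3 * h 4 * h 6 + (h 3 * h 3) * h 7
        - 2 * h 2 * (h 5 * h 7 - h 6 * h 6) := by
    funext h; simp only [C]; ring
  have hC : HasFDerivAt (fun h : Lstar =>
      (h 4 * h 4) * h 5 - 2 * h 3 * h 4 * h 6 + (h 3 * h 3) * h 7
        - 2 * h 2 * (h 5 * h 7 - h 6 * h 6)) _ h :=
    (((((p 4).mul (p 4)).mul (p 5)).sub
      ((((hasFDerivAt_const (2:ℝ) h).mul (p 3)).mul (p 4)).mul (p 6))).add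
      (((p 3).mul (p 3)).mul (p 7))).sub
      (((hasFDerivAt_const (2:ℝ) h).mul (p 2)).mul
        (((p 5).mul (p 7)).sub ((p 6).mul (p 6))))
  rw [pd, hfun, hC.fderiv]
  fin_cases i <;> simp [gradC, Pi.single_apply] <;> ring

set_option maxHeartbeats 2000000 in
/-- h6, h7, h8 and C Poisson-commute with every coordinate function. -/
theorem casimirs :
    ∀ j : Fin 8,
      (poisson (fun h => h 5) (fun h => h j) = 0) ∧
      (poisson (fun h => h 6) (fun h => h j) = 0) ∧
      (poisson (fun h => h 7) (fun h => h j) = 0) ∧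
      (poisson C (fun h => h j) = 0) := by
  intro j
  refine ⟨?_, ?_, ?_, ?_⟩ <;> funext h <;> rw [poisson_eq] <;>
    fin_cases j <;>
    simp [pd_coord, pd_C, gradC] <;> ring

end
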